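/- Let S be a step set satisfying Hypothesis (H), let i₀ ≥ 0, and let c_{i,j}(n) count n-step S-walks in the three-quadrant cone C starting at (i₀,i₀) and ending at (i,j). Then the following identity of formal power series in t, with coefficients in ℚ[x, x^{−1}, y, y^{−1}], holds: D̂(x,y) = x^{i₀} y^{i₀} + t(δ_{1,1}xy + δ_{−1,−1}x^{−1}y^{−1})·D̂(x,y) − t·δ_{−1,−1}·x^{−1}y^{−1}·D̂(0,0) + 2t(δ_{−1,0}x^{−1} + δ_{0,1}y)·D̂^ℓ(x,y) − 2t·δ_{−1,0}·x^{−1}y^{−1}·Σ_{n≥0} c_{0,−1}(n) t^n. -/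

import Mathlib

open scoped BigOperators

/-- The three-quadrant cone `𝒞 = {(i,j) ∈ ℤ² : i ≥ 0 or j ≥ 0}`. -/
def cone : Set (ℤ × ℤ) := {p | 0 ≤ p.1 ∨ 0 ≤ p.2}

/-- `walkCount S R p₀ n q`: the number of `n`-step walks with steps in `S`, all of whose
points lie in the region `R`, starting at `p₀` and ending at `q`. -/
noncomputable def walkCount (S : Finset (ℤ × ℤ)) (R : Set (ℤ × ℤ)) (p₀ : ℤ × ℤ)
    (n : ℕ) (q : ℤ × ℤ) : ℕ :=
  Nat.card {w : Fin (n + 1) → ℤ × ℤ //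
    w 0 = p₀ ∧ w (Fin.last n) = q ∧ (∀ k, w k ∈ R) ∧
    ∀ k : Fin n, w k.succ - w k.castSucc ∈ S}

/-- Laurent polynomials in the two variables `x, y`, with rational coefficients. -/
abbrev LP : Type := AddMonoidAlgebra ℚ (ℤ × ℤ)

/-- The Laurent monomial `x^i y^j`. -/
noncomputable def mono (v : ℤ × ℤ) : LP := AddMonoidAlgebra.single v 1

/-- Formal power series in `t` with Laurent-polynomial coefficients. -/
abbrev PS : Type := PowerSeries LP

noncomputable def CL : LP →+* PS := (PowerSeries.C : LP →+* PS)

/-- The series variable `t`. -/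
noncomputable def T : PS := PowerSeries.X

/-- The rational constant `1/2`. -/
noncomputable def half : PS := (PowerSeries.C : LP →+* PS) (algebraMap ℚ LP (1/2))

/-- The points reachable from `p₀` in at most `n` small steps. -/
noncomputable def box (p₀ : ℤ × ℤ) (n : ℕ) : Finset (ℤ × ℤ) :=
  Finset.Icc (p₀.1 - n, p₀.2 - n) (p₀.1 + n, p₀.2 + n)

/-- The diagonal starting point `(i₀, i₀)`. -/
def start (i₀ : ℕ) : ℤ × ℤ := ((i₀ : ℤ), (i₀ : ℤ))

/-- The kernel `K(x,y) = xy (t ∑_{(i,j) ∈ S} x^i y^j - 1)`. -/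
noncomputable def kerK (S : Finset (ℤ × ℤ)) : PS :=
  CL (mono (1, 1)) * (T * CL (∑ s ∈ S, mono s) - 1)

/-- `δ_v`: the indicator that the step `v` belongs to `S`. -/
noncomputable def dl (S : Finset (ℤ × ℤ)) (v : ℤ × ℤ) : PS := if v ∈ S then 1 else 0

/-- `L̂(x,y) = ∑_{n ≥ 0} ∑_{i ≥ 0, j ≤ i-1} c_{i,j}(n) x^i y^j t^n`:
walks ending strictly below the diagonal (in the lower part). -/
noncomputable def Lhat (S : Finset (ℤ × ℤ)) (i₀ : ℕ) : PS :=
  PowerSeries.mk fun n =>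
    ∑ p ∈ (box (start i₀) n).filter (fun p => 0 ≤ p.1 ∧ p.2 ≤ p.1 - 1),
      (walkCount S cone (start i₀) n p : LP) * mono p

/-- `Û(x,y) = ∑_{n ≥ 0} ∑_{j ≥ 0, i ≤ j-1} c_{i,j}(n) x^i y^j t^n`:
walks ending strictly above the diagonal (in the upper part). -/
noncomputable def Uhat (S : Finset (ℤ × ℤ)) (i₀ : ℕ) : PS :=
  PowerSeries.mk fun n =>
    ∑ p ∈ (box (start i₀) n).filter (fun p => 0 ≤ p.2 ∧ p.1 ≤ p.2 - 1),
      (walkCount S cone (start i₀) n p : LP) * mono p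

/-- `D̂(x,y) = ∑_{n ≥ 0} ∑_{i ≥ 0} c_{i,i}(n) x^i y^i t^n`: walks ending on the diagonal. -/
noncomputable def Dhat (S : Finset (ℤ × ℤ)) (i₀ : ℕ) : PS :=
  PowerSeries.mk fun n =>
    ∑ i ∈ Finset.Icc (0 : ℤ) ((i₀ : ℤ) + n),
      (walkCount S cone (start i₀) n (i, i) : LP) * mono (i, i)

/-- `D̂^ℓ(x,y) = ∑_{n ≥ 0} ∑_{i ≥ 0} c_{i,i-1}(n) x^i y^{i-1} t^n`:
walks ending on the lower diagonal. -/
noncomputable def Dlow (S : Finset (ℤ × ℤ)) (i₀ : ℕ) : PS :=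
  PowerSeries.mk fun n =>
    ∑ i ∈ Finset.Icc (0 : ℤ) ((i₀ : ℤ) + n),
      (walkCount S cone (start i₀) n (i, i - 1) : LP) * mono (i, i - 1)

/-- `L̂_{0-}(y⁻¹) = ∑_{n ≥ 0} ∑_{j < 0} c_{0,j}(n) y^j t^n`:
walks ending on the negative `y`-axis. -/
noncomputable def L0minus (S : Finset (ℤ × ℤ)) (i₀ : ℕ) : PS :=
  PowerSeries.mk fun n =>
    ∑ j ∈ Finset.Icc ((i₀ : ℤ) - n) (-1),
      (walkCount S cone (start i₀) n (0, j) : LP) * mono (0, j)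

/-- `D̂(0,0) = ∑_{n ≥ 0} c_{0,0}(n) t^n`: walks ending at the origin. -/
noncomputable def D00 (S : Finset (ℤ × ℤ)) (i₀ : ℕ) : PS :=
  PowerSeries.mk fun n => (walkCount S cone (start i₀) n (0, 0) : LP)

/-- `∑_{n ≥ 0} c_{0,-1}(n) t^n`: walks ending at `(0,-1)`. -/
noncomputable def C0m1 (S : Finset (ℤ × ℤ)) (i₀ : ℕ) : PS :=
  PowerSeries.mk fun n => (walkCount S cone (start i₀) n (0, -1) : LP)

/-!
Split a walk of length `n + 1` ending at `(a, a)`, `a ≥ 0`, according to its last step. Under (H)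
its predecessor is `(a ∓ 1, a ∓ 1)` on the diagonal or one of `(a - 1, a)`, `(a, a - 1)`,
`(a + 1, a)`, `(a, a + 1)`; reflection in the diagonal, a symmetry of `S` and of the cone fixing
the start, identifies the walks ending at the two points of each pair, whence the factor `2` in
front of `D̂^ℓ`. Comparing coefficients of `x^a y^b t^(n+1)`, the shifts by `x⁻¹y⁻¹` and `x⁻¹` also
create monomials at `(-1, -1)`, from the walks ending at `(0, 0)` and `(0, -1)`; the two
subtracted terms remove them.
-/

/-- The walks counted by `walkCount`, so that `walkCount S R p₀ n q` is definitionally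
`Nat.card {w // IsWalk S R p₀ n q w}`. -/
def IsWalk (S : Finset (ℤ × ℤ)) (R : Set (ℤ × ℤ)) (p₀ : ℤ × ℤ) (n : ℕ) (q : ℤ × ℤ)
    (w : Fin (n + 1) → ℤ × ℤ) : Prop :=
  w 0 = p₀ ∧ w (Fin.last n) = q ∧ (∀ k, w k ∈ R) ∧ ∀ k : Fin n, w k.succ - w k.castSucc ∈ S

namespace IsWalk

variable {S : Finset (ℤ × ℤ)} {R : Set (ℤ × ℤ)} {p₀ q : ℤ × ℤ} {n : ℕ}

theorem mem_box (hS : S ⊆ Finset.Icc (-1, -1) (1, 1)) {w : Fin (n + 1) → ℤ × ℤ}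
    (hw : IsWalk S R p₀ n q w) (k : Fin (n + 1)) : w k ∈ box p₀ n := by
  obtain ⟨h0, -, -, hstep⟩ := hw
  have hk : (k : ℕ) ≤ n := Nat.lt_succ_iff.mp k.isLt
  have bound : ∀ k : Fin (n + 1), p₀.1 - k ≤ (w k).1 ∧ (w k).1 ≤ p₀.1 + k ∧
      p₀.2 - k ≤ (w k).2 ∧ (w k).2 ≤ p₀.2 + k := by
    intro k
    induction k using Fin.induction with
    | zero => simp [h0]
    | succ k ih =>
      have hs := hS (hstep k)
      simp only [Finset.mem_Icc, Prod.le_def, Prod.fst_sub, Prod.snd_sub] at hs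
      simp only [Fin.val_succ, Fin.val_castSucc] at ih ⊢
      push_cast
      omega
  simp only [box, Finset.mem_Icc, Prod.le_def]
  have := bound k
  omega

theorem init {w : Fin (n + 2) → ℤ × ℤ} (hw : IsWalk S R p₀ (n + 1) q w) :
    IsWalk S R p₀ n (w (Fin.last n).castSucc) (Fin.init w) := by
  obtain ⟨h0, -, hmem, hstep⟩ := hw
  refine ⟨h0, rfl, fun k => hmem _, fun k => ?_⟩
  simpa [Fin.init, ← Fin.succ_castSucc] using hstep k.castSucc

theorem snoc {q' : ℤ × ℤ} {w : Fin (n + 1) → ℤ × ℤ} (hw : IsWalk S R p₀ n q' w) (hq : q ∈ R)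
    (hs : q - q' ∈ S) : IsWalk S R p₀ (n + 1) q (Fin.snoc w q) := by
  obtain ⟨h0, hl, hmem, hstep⟩ := hw
  refine ⟨by simpa using h0, by simp, fun k => ?_, fun k => ?_⟩
  · induction k using Fin.lastCases with
    | last => simpa using hq
    | cast k => simpa using hmem k
  · induction k using Fin.lastCases with
    | last => simpa [hl] using hs
    | cast k => rw [Fin.succ_castSucc, Fin.snoc_castSucc, Fin.snoc_castSucc]; exact hstep k

theorem swap (hS : ∀ s ∈ S, s.swap ∈ S) (hR : ∀ p ∈ R, p.swap ∈ R) {w : Fin (n + 1) → ℤ × ℤ}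
    (hw : IsWalk S R p₀ n q w) : IsWalk S R p₀.swap n q.swap (Prod.swap ∘ w) := by
  obtain ⟨h0, hl, hmem, hstep⟩ := hw
  refine ⟨by simp [h0], by simp [hl], fun k => hR _ (hmem k), fun k => ?_⟩
  simpa only [Function.comp_apply, ← Prod.swap_sub] using hS _ (hstep k)

end IsWalk

section WalkCount

variable {S : Finset (ℤ × ℤ)} {R : Set (ℤ × ℤ)} {p₀ q : ℤ × ℤ} {n : ℕ}

theorem finite_isWalk (hS : S ⊆ Finset.Icc (-1, -1) (1, 1)) :
    {w | IsWalk S R p₀ n q w}.Finite :=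
  (Set.Finite.pi' fun _ => (box p₀ n).finite_toSet).subset fun _ hw => hw.mem_box hS

theorem walkCount_eq_zero_of_not_mem (hq : q ∉ R) : walkCount S R p₀ n q = 0 := by
  by_contra h
  obtain ⟨⟨w, hw⟩⟩ := (Nat.card_ne_zero.mp h).1
  exact hq (hw.2.1 ▸ hw.2.2.1 _)

theorem mem_box_of_walkCount_ne_zero (hS : S ⊆ Finset.Icc (-1, -1) (1, 1))
    (h : walkCount S R p₀ n q ≠ 0) : q ∈ box p₀ n := by
  obtain ⟨⟨w, hw⟩⟩ := (Nat.card_ne_zero.mp h).1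
  exact hw.2.1 ▸ IsWalk.mem_box hS hw _

theorem walkCount_zero (hp₀ : p₀ ∈ R) : walkCount S R p₀ 0 q = if q = p₀ then 1 else 0 := by
  split_ifs with hq
  · subst hq
    refine Nat.card_eq_one_iff_exists.mpr ⟨⟨fun _ => q, rfl, rfl, fun _ => hp₀, Fin.elim0⟩, ?_⟩
    rintro ⟨w, h0, -⟩
    exact Subtype.ext (funext fun k => Fin.fin_one_eq_zero k ▸ h0)
  · have : IsEmpty {w // IsWalk S R p₀ 0 q w} := ⟨fun w => hq (w.2.2.1.symm.trans w.2.1)⟩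
    exact Nat.card_of_isEmpty (α := {w // IsWalk S R p₀ 0 q w})

theorem walkCount_succ (hS : S ⊆ Finset.Icc (-1, -1) (1, 1)) (hq : q ∈ R) :
    walkCount S R p₀ (n + 1) q = ∑ s ∈ S, walkCount S R p₀ n (q - s) := by
  let lastStep : {w // IsWalk S R p₀ (n + 1) q w} → S := fun w =>
    ⟨w.1 (Fin.last _) - w.1 (Fin.last n).castSucc, by simpa using w.2.2.2.2 (Fin.last n)⟩
  have fiber (s : S) : {w // lastStep w = s} ≃ {w // IsWalk S R p₀ n (q - s) w} :=
    { toFun w := ⟨Fin.init w.1.1, by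
        have h := congrArg Subtype.val w.2
        simp only [lastStep, w.1.2.2.1] at h
        simpa [← h] using w.1.2.init⟩
      invFun w := ⟨⟨Fin.snoc w.1 q, w.2.snoc hq (by simp)⟩, by simp [lastStep, w.2.2.1]⟩
      left_inv w := by
        apply Subtype.ext; apply Subtype.ext
        simp [← w.1.2.2.1]
      right_inv w := Subtype.ext (by simp) }
  have (s : S) : Finite {w // lastStep w = s} :=
    .of_equiv _ (fiber s).symm (h := (finite_isWalk hS).to_subtype)
  calc walkCount S R p₀ (n + 1) q = Nat.card (Σ s : S, {w // lastStep w = s}) :=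
        Nat.card_congr (Equiv.sigmaFiberEquiv lastStep).symm
    _ = ∑ s : S, walkCount S R p₀ n (q - s) := by
        rw [Nat.card_sigma]
        exact Finset.sum_congr rfl fun s _ => Nat.card_congr (fiber s)
    _ = ∑ s ∈ S, walkCount S R p₀ n (q - s) :=
        Finset.sum_coe_sort S fun s => walkCount S R p₀ n (q - s)

theorem walkCount_swap (hS : ∀ s ∈ S, s.swap ∈ S) (hR : ∀ p ∈ R, p.swap ∈ R) :
    walkCount S R p₀.swap n q.swap = walkCount S R p₀ n q :=
  Nat.card_congr
    { toFun w := ⟨Prod.swap ∘ w.1, by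
        have h := IsWalk.swap hS hR (w := w.1) w.2
        rwa [Prod.swap_swap, Prod.swap_swap] at h⟩
      invFun w := ⟨Prod.swap ∘ w.1, IsWalk.swap hS hR (w := w.1) w.2⟩
      left_inv _ := rfl
      right_inv _ := rfl }

end WalkCount

theorem coeff_mono_mul (u v : ℤ × ℤ) (P : LP) : (mono u * P).coeff v = P.coeff (v - u) := by
  simp [mono, neg_add_eq_sub]

theorem coeff_natCast_mul_mono (m : ℕ) (u v : ℤ × ℤ) :
    ((m : LP) * mono u).coeff v = if u = v then (m : ℚ) else 0 := by
  simp [mono, AddMonoidAlgebra.natCast_def, AddMonoidAlgebra.single_mul_single,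
    Finsupp.single_apply]

theorem coeff_sum_Icc_natCast_mul_mono (f : ℤ × ℤ → ℕ) (k N : ℤ) (v : ℤ × ℤ) :
    (∑ i ∈ Finset.Icc 0 N, (f (i, i - k) : LP) * mono (i, i - k)).coeff v =
      if v.1 ∈ Finset.Icc 0 N ∧ v.2 = v.1 - k then (f v : ℚ) else 0 := by
  obtain ⟨a, b⟩ := v
  have term (i : ℤ) : ((f (i, i - k) : LP) * mono (i, i - k)).coeff (a, b) =
      if a = i then (if b = a - k then (f (a, b) : ℚ) else 0) else 0 := by
    rw [coeff_natCast_mul_mono]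
    by_cases hi : a = i
    · subst hi; by_cases hb : b = a - k <;> simp [hb, eq_comm]
    · simp [hi, Ne.symm hi]
  simp only [AddMonoidAlgebra.coeff_sum, Finsupp.finsetSum_apply, term, Finset.sum_ite_eq, ite_and]

theorem coeff_ite_one_mul (p : Prop) [Decidable p] (P : LP) (v : ℤ × ℤ) :
    ((if p then 1 else 0) * P).coeff v = if p then P.coeff v else 0 := by
  split_ifs <;> simp

theorem coeff_two_mul (P : LP) (v : ℤ × ℤ) : (2 * P).coeff v = 2 * P.coeff v := by
  simp [two_mul]

theorem dl_eq_CL (S : Finset (ℤ × ℤ)) (v : ℤ × ℤ) : dl S v = CL (if v ∈ S then 1 else 0) := by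
  unfold dl
  split_ifs <;> simp

theorem subset_of_not_mem_antidiagonal {S : Finset (ℤ × ℤ)}
    (hS : S ⊆ (Finset.Icc (-1, -1) (1, 1)).erase (0, 0))
    (hm : ((-1 : ℤ), (1 : ℤ)) ∉ S) (hp : ((1 : ℤ), (-1 : ℤ)) ∉ S) :
    S ⊆ {(1, 1), (-1, -1), (1, 0), (0, 1), (-1, 0), (0, -1)} := by
  intro s hs
  have hs' := hS hs
  have hm' : s ≠ (-1, 1) := fun h => hm (h ▸ hs)
  have hp' : s ≠ (1, -1) := fun h => hp (h ▸ hs)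
  obtain ⟨a, b⟩ := s
  simp only [Finset.mem_erase, Finset.mem_Icc, Prod.le_def, Finset.mem_insert,
    Finset.mem_singleton, Prod.mk.injEq, ne_eq] at hs' hm' hp' ⊢
  omega

theorem swap_mem_cone {p : ℤ × ℤ} (hp : p ∈ cone) : p.swap ∈ cone := Or.symm hp

section Diagonal

variable {S : Finset (ℤ × ℤ)} {i₀ : ℕ}

theorem walkCount_succ_diagonal (hS : S ⊆ (Finset.Icc (-1, -1) (1, 1)).erase (0, 0))
    (hsym : ∀ s ∈ S, s.swap ∈ S) (hm : ((-1 : ℤ), (1 : ℤ)) ∉ S) (hp : ((1 : ℤ), (-1 : ℤ)) ∉ S)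
    {p₀ : ℤ × ℤ} (hp₀ : p₀.swap = p₀) (n : ℕ) {a : ℤ} (ha : 0 ≤ a) :
    walkCount S cone p₀ (n + 1) (a, a) =
      (if (1, 1) ∈ S then walkCount S cone p₀ n (a - 1, a - 1) else 0) +
      (if (-1, -1) ∈ S then walkCount S cone p₀ n (a + 1, a + 1) else 0) +
      2 * (if (0, 1) ∈ S then walkCount S cone p₀ n (a, a - 1) else 0) +
      2 * (if (-1, 0) ∈ S then walkCount S cone p₀ n (a + 1, a) else 0) := by
  have hS' : S ⊆ Finset.Icc (-1, -1) (1, 1) := hS.trans (Finset.erase_subset _ _)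
  have reflect (q : ℤ × ℤ) : walkCount S cone p₀ n q.swap = walkCount S cone p₀ n q := by
    simpa [hp₀] using walkCount_swap (p₀ := p₀) (n := n) (q := q) hsym fun _ => swap_mem_cone
  have h10 : (1, 0) ∈ S ↔ (0, 1) ∈ S := ⟨hsym _, hsym _⟩
  have h01 : (0, -1) ∈ S ↔ (-1, 0) ∈ S := ⟨hsym _, hsym _⟩
  have expand (f : ℤ × ℤ → ℕ) : ∑ s ∈ S, f s =
      ∑ s ∈ {(1, 1), (-1, -1), (1, 0), (0, 1), (-1, 0), (0, -1)}, if s ∈ S then f s else 0 := by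
    rw [Finset.sum_ite_mem, Finset.inter_eq_right.mpr (subset_of_not_mem_antidiagonal hS hm hp)]
  rw [walkCount_succ hS' (Or.inl ha), expand]
  rw [Finset.sum_insert (by decide), Finset.sum_insert (by decide), Finset.sum_insert (by decide),
    Finset.sum_insert (by decide), Finset.sum_insert (by decide), Finset.sum_singleton]
  simp only [Prod.mk_sub_mk, sub_neg_eq_add, sub_zero, h10, h01]
  rw [← reflect (a - 1, a), ← reflect (a, a + 1)]
  simp only [Prod.swap_prod_mk]
  split_ifs <;> ring

theorem coeff_sum_walkCount_diagonal (hS : S ⊆ Finset.Icc (-1, -1) (1, 1)) {k : ℤ} (hk : 0 ≤ k)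
    (n : ℕ) (v : ℤ × ℤ) :
    (∑ i ∈ Finset.Icc 0 ((i₀ : ℤ) + n),
        (walkCount S cone (start i₀) n (i, i - k) : LP) * mono (i, i - k)).coeff v =
      if v.2 = v.1 - k then (walkCount S cone (start i₀) n v : ℚ) else 0 := by
  rw [coeff_sum_Icc_natCast_mul_mono (walkCount S cone (start i₀) n)]
  by_cases hc : walkCount S cone (start i₀) n v = 0
  · simp [hc]
  have hcone : v ∈ cone := by_contra fun h => hc (walkCount_eq_zero_of_not_mem h)
  have hbox := mem_box_of_walkCount_ne_zero hS hc
  by_cases hv : v.2 = v.1 - k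
  · have hv₁ : v.1 ∈ Finset.Icc 0 ((i₀ : ℤ) + n) := by
      simp only [cone, box, start, Set.mem_ofPred_eq, Finset.mem_Icc, Prod.le_def] at hcone hbox ⊢
      omega
    simp [hv, hv₁]
  · simp [hv]

theorem coeff_coeff_Dhat (hS : S ⊆ Finset.Icc (-1, -1) (1, 1)) (n : ℕ) (v : ℤ × ℤ) :
    (PowerSeries.coeff n (Dhat S i₀)).coeff v =
      if v.2 = v.1 then (walkCount S cone (start i₀) n v : ℚ) else 0 := by
  simpa [Dhat] using coeff_sum_walkCount_diagonal hS le_rfl n v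

theorem coeff_coeff_Dlow (hS : S ⊆ Finset.Icc (-1, -1) (1, 1)) (n : ℕ) (v : ℤ × ℤ) :
    (PowerSeries.coeff n (Dlow S i₀)).coeff v =
      if v.2 = v.1 - 1 then (walkCount S cone (start i₀) n v : ℚ) else 0 := by
  simpa [Dlow] using coeff_sum_walkCount_diagonal hS zero_le_one n v

theorem coeff_zero_Dhat (hS : S ⊆ Finset.Icc (-1, -1) (1, 1)) :
    PowerSeries.coeff 0 (Dhat S i₀) = mono ((i₀ : ℤ), (i₀ : ℤ)) := by
  ext ⟨a, b⟩
  rw [coeff_coeff_Dhat hS, walkCount_zero (Or.inl (Int.natCast_nonneg i₀))]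
  simp only [mono, start, AddMonoidAlgebra.coeff_single, Finsupp.single_apply, Prod.mk.injEq]
  by_cases ha : a = i₀ <;> by_cases hb : b = i₀ <;> simp [ha, hb, eq_comm]

theorem coeff_succ_Dhat (hS : S ⊆ (Finset.Icc (-1, -1) (1, 1)).erase (0, 0))
    (hsym : ∀ s ∈ S, s.swap ∈ S) (hm : ((-1 : ℤ), (1 : ℤ)) ∉ S) (hp : ((1 : ℤ), (-1 : ℤ)) ∉ S)
    (n : ℕ) :
    PowerSeries.coeff (n + 1) (Dhat S i₀) =
      (if (1, 1) ∈ S then 1 else 0) * (mono (1, 1) * PowerSeries.coeff n (Dhat S i₀)) +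
      (if (-1, -1) ∈ S then 1 else 0) *
        (mono (-1, -1) * (PowerSeries.coeff n (Dhat S i₀) - PowerSeries.coeff n (D00 S i₀))) +
      2 * ((if (0, 1) ∈ S then 1 else 0) * (mono (0, 1) * PowerSeries.coeff n (Dlow S i₀))) +
      2 * ((if (-1, 0) ∈ S then 1 else 0) *
        (mono (-1, 0) * PowerSeries.coeff n (Dlow S i₀) -
          mono (-1, -1) * PowerSeries.coeff n (C0m1 S i₀))) := by
  have hS' : S ⊆ Finset.Icc (-1, -1) (1, 1) := hS.trans (Finset.erase_subset _ _)
  ext ⟨a, b⟩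
  simp only [AddMonoidAlgebra.coeff_add, AddMonoidAlgebra.coeff_sub, Finsupp.add_apply,
    Finsupp.sub_apply, coeff_ite_one_mul, coeff_two_mul, coeff_mono_mul, Prod.mk_sub_mk,
    coeff_coeff_Dhat hS', coeff_coeff_Dlow hS', D00, C0m1, PowerSeries.coeff_mk,
    AddMonoidAlgebra.coeff_natCast, Finsupp.single_apply, sub_neg_eq_add, sub_zero,
    sub_left_inj, add_left_inj, add_sub_cancel_right, Prod.ext_iff, Prod.fst_zero, Prod.snd_zero]
  have outside (m : ℕ) {x y : ℤ} (hx : x < 0) (hy : y < 0) :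
      walkCount S cone (start i₀) m (x, y) = 0 :=
    walkCount_eq_zero_of_not_mem (by simp [cone]; omega)
  by_cases hab : b = a
  swap
  · have : ¬ (0 = a + 1 ∧ 0 = b + 1) := by omega
    simp [hab, this]
  subst hab
  rcases lt_trichotomy b (-1) with hb | rfl | hb
  · have : (0 : ℤ) ≠ b + 1 := by omega
    simp (disch := omega) [this, outside]
  · simp (disch := omega) [outside]
  · have : (0 : ℤ) ≠ b + 1 := by omega
    rw [walkCount_succ_diagonal hS hsym hm hp rfl n (by omega : 0 ≤ b)]
    simp [this]

end Diagonal

/-- The step-by-step construction equation for the diagonal generating function `D̂`,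
for a symmetric model (Hypothesis (H)) started at the diagonal point `(i₀, i₀)`. -/
theorem construction_equation_diagonal
    (S : Finset (ℤ × ℤ)) (hS : S ⊆ (Finset.Icc (-1, -1) (1, 1)).erase (0, 0))
    (hsym : ∀ s ∈ S, (s.2, s.1) ∈ S)
    (hm : ((-1 : ℤ), (1 : ℤ)) ∉ S) (hp : ((1 : ℤ), (-1 : ℤ)) ∉ S)
    (i₀ : ℕ) :
    Dhat S i₀ =
      CL (mono ((i₀ : ℤ), (i₀ : ℤ))) +
      T * (dl S (1, 1) * CL (mono (1, 1)) + dl S (-1, -1) * CL (mono (-1, -1))) * Dhat S i₀ -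
      T * dl S (-1, -1) * CL (mono (-1, -1)) * D00 S i₀ +
      2 * T * (dl S (-1, 0) * CL (mono (-1, 0)) + dl S (0, 1) * CL (mono (0, 1))) *
        Dlow S i₀ -
      2 * T * dl S (-1, 0) * CL (mono (-1, -1)) * C0m1 S i₀ := by
  ext (_ | n) : 1
  · simp [T, CL, coeff_zero_Dhat (hS.trans (Finset.erase_subset _ _))]
  · rw [coeff_succ_Dhat hS hsym hm hp, mul_comm 2 T, ← map_ofNat PowerSeries.C 2]
    simp only [dl_eq_CL, T, CL, mul_assoc, add_mul, map_add, map_sub, PowerSeries.coeff_succ_X_mul,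
      PowerSeries.coeff_C_mul, PowerSeries.coeff_C, Nat.succ_ne_zero, if_false, zero_add]
    ring
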